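/- Let n, m ≥ 1 be integers and δ > 0. There is a constant C1 depending only on n and m with the following property: if ‖·‖ is a seminorm on R^{n+m} such that for every coordinate n-plane P there exists a unit vector v_P ∈ P with ‖v_P‖ < δ, then there is an (m+1)-dimensional subspace K0 ⊆ R^{n+m} such that ‖v‖ ≤ C1·δ·|v| for all v ∈ K0, where |v| denotes the Euclidean norm. -/

import Mathlib

open Metric Set MeasureTheory ENNReal

noncomputable section

/-- The `k`-dimensional Hausdorff content of a set in a metric space, defined via
countable covers by closed balls. -/
def hContent {X : Type*} [MetricSpace X] (k : ℕ) (S : Set X) : ℝ≥0∞ :=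
  ⨅ (B : ℕ → Set X) (_ : S ⊆ ⋃ i, B i) (_ : ∀ i, ∃ x r, B i = Metric.closedBall x r),
    ∑' i, EMetric.diam (B i) ^ k

/-- The `k`-dimensional Hausdorff measure of a set in a metric space, defined via
countable covers by closed balls of diameter at most `δ`, letting `δ → 0`. -/
def hMeasure {X : Type*} [MetricSpace X] (k : ℕ) (S : Set X) : ℝ≥0∞ :=
  ⨆ (δ : ℝ≥0∞) (_ : 0 < δ),
    ⨅ (B : ℕ → Set X) (_ : S ⊆ ⋃ i, B i)
      (_ : ∀ i, (∃ x r, B i = Metric.closedBall x r) ∧ EMetric.diam (B i) ≤ δ),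
      ∑' i, EMetric.diam (B i) ^ k

/-- The closed unit cube `[0,1]^d` in `ℝ^d`. -/
def unitCube (d : ℕ) : Set (EuclideanSpace ℝ (Fin d)) :=
  {p | ∀ i, p i ∈ Set.Icc (0 : ℝ) 1}

/-- A dyadic subcube of `[0,1]^d`: it has side length `2⁻ᵏ` and lower-left corner `z/2ᵏ`. -/
structure DyadicCube (d : ℕ) : Type where
  k : ℕ
  z : Fin d → ℕ
  hz : ∀ i, z i + 1 ≤ 2 ^ k

namespace DyadicCube

/-- The side length of a dyadic cube. -/
def side {d : ℕ} (Q : DyadicCube d) : ℝ := (2 : ℝ)⁻¹ ^ Q.k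

/-- The center of a dyadic cube. -/
def center {d : ℕ} (Q : DyadicCube d) (i : Fin d) : ℝ :=
  ((Q.z i : ℝ) + 1 / 2) * (2 : ℝ)⁻¹ ^ Q.k

/-- The dyadic cube as a (closed) subset of `ℝ^d`. -/
def toSet {d : ℕ} (Q : DyadicCube d) : Set (EuclideanSpace ℝ (Fin d)) :=
  {p | ∀ i, |p i - Q.center i| ≤ Q.side / 2}

/-- `Q.scaled λ` is the cube `λQ`, with the same center as `Q` and `λ` times the side length. -/
def scaled {d : ℕ} (Q : DyadicCube d) (lam : ℝ) : Set (EuclideanSpace ℝ (Fin d)) :=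
  {p | ∀ i, |p i - Q.center i| ≤ lam * Q.side / 2}

end DyadicCube

/-- The `(n,m)`-mapping content `H^{n,m}_∞(f, A)`: the infimum of
`∑ H^n_∞(f(Q_i)) side(Q_i)^m` over countable covers of `A` by dyadic cubes of `[0,1]^{n+m}`
with pairwise disjoint interiors. -/
def mContent (n m : ℕ) {X : Type*} [MetricSpace X]
    (f : EuclideanSpace ℝ (Fin (n + m)) → X)
    (A : Set (EuclideanSpace ℝ (Fin (n + m)))) : ℝ≥0∞ :=
  ⨅ (S : Set (DyadicCube (n + m))) (_ : A ⊆ ⋃ Q ∈ S, Q.toSet)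
    (_ : S.Pairwise fun Q Q' => interior Q.toSet ∩ interior Q'.toSet = ∅),
    ∑' Q : S, hContent n (f '' Q.1.toSet) * ENNReal.ofReal (Q.1.side ^ m)

/-- The alternative `(n,m)`-mapping content `Ĥ^{n,m}_∞(f, A)`: the infimum of
`∑ H^n_∞(f(S_i)) diam(S_i)^m` over countable covers of `A` by arbitrary subsets of
`[0,1]^{n+m}`. -/
def altMContent (n m : ℕ) {X : Type*} [MetricSpace X]
    (f : EuclideanSpace ℝ (Fin (n + m)) → X)
    (A : Set (EuclideanSpace ℝ (Fin (n + m)))) : ℝ≥0∞ :=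
  ⨅ (S : ℕ → Set (EuclideanSpace ℝ (Fin (n + m)))) (_ : A ⊆ ⋃ i, S i)
    (_ : ∀ i, S i ⊆ unitCube (n + m)),
    ∑' i, hContent n (f '' S i) * EMetric.diam (S i) ^ m

/-- The first `n` coordinates of a point of `ℝ^{n+m} = ℝ^n × ℝ^m`. -/
def xpart (n m : ℕ) (p : EuclideanSpace ℝ (Fin (n + m))) : EuclideanSpace ℝ (Fin n) :=
  WithLp.toLp 2 (fun i => p (Fin.castAdd m i))

/-- The last `m` coordinates of a point of `ℝ^{n+m} = ℝ^n × ℝ^m`. -/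
def ypart (n m : ℕ) (p : EuclideanSpace ℝ (Fin (n + m))) : EuclideanSpace ℝ (Fin m) :=
  WithLp.toLp 2 (fun j => p (Fin.natAdd n j))

/-- The point `(x, y) ∈ ℝ^{n+m}` built from `x ∈ ℝ^n`, `y ∈ ℝ^m`. -/
def pairup (n m : ℕ) (x : EuclideanSpace ℝ (Fin n)) (y : EuclideanSpace ℝ (Fin m)) :
    EuclideanSpace ℝ (Fin (n + m)) :=
  WithLp.toLp 2 (fun i => Fin.addCases (fun i₁ => x i₁) (fun j => y j) i)

/-- The horizontal slice `E_y = E ∩ (ℝ^n × {y})`. -/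
def cubeSlice (n m : ℕ) (E : Set (EuclideanSpace ℝ (Fin (n + m))))
    (y : EuclideanSpace ℝ (Fin m)) : Set (EuclideanSpace ℝ (Fin (n + m))) :=
  {p ∈ E | ypart n m p = y}

/-- `f` is `C`-bi-Lipschitz on `s`. -/
def BiLipschitzOnWith {α β : Type*} [PseudoMetricSpace α] [PseudoMetricSpace β]
    (C : ℝ) (f : α → β) (s : Set α) : Prop :=
  ∀ x ∈ s, ∀ y ∈ s, C⁻¹ * dist x y ≤ dist (f x) (f y) ∧ dist (f x) (f y) ≤ C * dist x y

/-- `(E, g)` is a Hard Sard pair for `f` with constant `C`: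
(i) `g` is a globally `C`-bi-Lipschitz homeomorphism of `ℝ^{n+m}` (in particular it restricts
to a bi-Lipschitz map on `E`);
(ii) writing `F = f ∘ g⁻¹`, for `(x,y), (x',y') ∈ g(E)` one has `F(x,y) = F(x',y')` iff `x = x'`;
(iii) the map `(x,y) ↦ (F(x,y), y)` is `C`-bi-Lipschitz on `g(E)`, where `X × ℝ^m` carries the
max metric.  Conditions (ii) and (iii) are expressed at points `p = g⁻¹(x,y)`, `q = g⁻¹(x',y')`
of `E`. -/
def IsHardSardPairWith (n m : ℕ) {X : Type*} [MetricSpace X]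
    (f : EuclideanSpace ℝ (Fin (n + m)) → X)
    (E : Set (EuclideanSpace ℝ (Fin (n + m))))
    (g : EuclideanSpace ℝ (Fin (n + m)) → EuclideanSpace ℝ (Fin (n + m)))
    (C : ℝ) : Prop :=
  Function.Surjective g ∧
  BiLipschitzOnWith C g Set.univ ∧
  (∀ p ∈ E, ∀ q ∈ E, (f p = f q ↔ xpart n m (g p) = xpart n m (g q))) ∧
  (∀ p ∈ E, ∀ q ∈ E,
    C⁻¹ * dist (g p) (g q) ≤ dist (f p, ypart n m (g p)) (f q, ypart n m (g q)) ∧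
    dist (f p, ypart n m (g p)) (f q, ypart n m (g q)) ≤ C * dist (g p) (g q))

/-- `E` is a Hard Sard set for `f` with constant `C`. -/
def IsHardSardSetWith (n m : ℕ) {X : Type*} [MetricSpace X]
    (f : EuclideanSpace ℝ (Fin (n + m)) → X)
    (E : Set (EuclideanSpace ℝ (Fin (n + m)))) (C : ℝ) : Prop :=
  ∃ g, IsHardSardPairWith n m f E g C

/-- `sup_{x,y ∈ s} | d(f(x), f(y)) - N(x - y) |`. -/
def mdSup {d : ℕ} {X : Type*} [MetricSpace X] (f : EuclideanSpace ℝ (Fin d) → X)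
    (s : Set (EuclideanSpace ℝ (Fin d))) (N : Seminorm ℝ (EuclideanSpace ℝ (Fin d))) : ℝ :=
  ⨆ x : s, ⨆ y : s, |dist (f x.1) (f y.1) - N (x.1 - y.1)|

/-- `md_f` on a set `s` (a cube of side length `side`):
`side⁻¹ · inf_N sup_{x,y ∈ s} | d(f(x), f(y)) - N(x-y) |`, the infimum being over all
seminorms `N` on `ℝ^d`. -/
def mdf {d : ℕ} {X : Type*} [MetricSpace X] (f : EuclideanSpace ℝ (Fin d) → X)
    (s : Set (EuclideanSpace ℝ (Fin d))) (side : ℝ) : ℝ :=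
  side⁻¹ * ⨅ N : Seminorm ℝ (EuclideanSpace ℝ (Fin d)), mdSup f s N

/-- The coordinate plane spanned by the standard basis vectors `e_i`, `i ∈ s`. -/
def coordPlane {d : ℕ} (s : Finset (Fin d)) : Submodule ℝ (EuclideanSpace ℝ (Fin d)) :=
  Submodule.span ℝ {v | ∃ i ∈ s, v = EuclideanSpace.single i (1 : ℝ)}

/-!
A subspace `U` of `ℝ^d` with `dim U + n ≤ d` meets some coordinate `n`-plane trivially: add
coordinate directions one at a time outside the current sum. Compactness of the space of
orthonormal frames makes this quantitative: there is `c > 0` such that every such `U` has a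
coordinate `n`-plane whose unit vectors all lie at distance `≥ c` from `U`. Starting from `K = 0`,
repeatedly take a unit vector `v` with `N v < δ` in the coordinate plane far from `K` and pass to
`K ⊕ ℝv`. The distance bound controls the coefficient of `v`, so a bound `N ≤ Cδ‖·‖` on `K`
becomes `N ≤ (C(1 + c⁻¹) + c⁻¹)δ‖·‖` on `K ⊕ ℝv`.
-/

open scoped InnerProductSpace

section CoordPlane

variable {d : ℕ}

lemma coordPlane_empty : coordPlane (∅ : Finset (Fin d)) = ⊥ := by
  simp [coordPlane]

lemma coordPlane_insert (i : Fin d) (s : Finset (Fin d)) :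
    coordPlane (insert i s) = coordPlane s ⊔ ℝ ∙ EuclideanSpace.single i (1 : ℝ) := by
  rw [coordPlane, coordPlane, sup_comm, ← Submodule.span_insert]
  congr 1
  ext v
  simp

lemma finrank_coordPlane_le (s : Finset (Fin d)) : Module.finrank ℝ (coordPlane s) ≤ s.card := by
  have h : {v | ∃ i ∈ s, v = EuclideanSpace.single i (1 : ℝ)} =
      ↑(s.image fun i => EuclideanSpace.single i (1 : ℝ)) := by
    ext v; simp [eq_comm]
  rw [coordPlane, h]
  exact (finrank_span_finset_le_card _).trans Finset.card_image_le

theorem exists_coordPlane_disjoint {n : ℕ} (U : Submodule ℝ (EuclideanSpace ℝ (Fin d)))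
    (h : Module.finrank ℝ U + n ≤ d) :
    ∃ s : Finset (Fin d), s.card = n ∧ Disjoint U (coordPlane s) := by
  induction n with
  | zero => exact ⟨∅, rfl, by simp [coordPlane_empty]⟩
  | succ n ih =>
    obtain ⟨s, hs, hUs⟩ := ih (by omega)
    obtain ⟨i, hi⟩ : ∃ i, EuclideanSpace.single i (1 : ℝ) ∉ U ⊔ coordPlane s := by
      by_contra! hall
      have htop : U ⊔ coordPlane s = ⊤ := by
        rw [eq_top_iff, ← (EuclideanSpace.basisFun (Fin d) ℝ).toBasis.span_eq, Submodule.span_le]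
        rintro _ ⟨i, rfl⟩
        simpa using hall i
      have hsup := Submodule.finrank_add_le_finrank_add_finrank U (coordPlane s)
      rw [htop, finrank_top, finrank_euclideanSpace_fin] at hsup
      have := finrank_coordPlane_le s
      omega
    have his : i ∉ s := fun his => hi (Submodule.mem_sup_right
      (Submodule.subset_span ⟨i, his, rfl⟩))
    refine ⟨insert i s, by rw [Finset.card_insert_of_notMem his, hs], ?_⟩
    rw [coordPlane_insert]
    exact hUs.disjoint_sup_right_of_disjoint_sup_left
      ((Submodule.disjoint_span_singleton' (by simp)).2 hi)

end CoordPlane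

theorem Orthonormal.norm_sub_sum_inner_smul_le {𝕜 E ι : Type*} [RCLike 𝕜] [NormedAddCommGroup E]
    [InnerProductSpace 𝕜 E] [Fintype ι] {u : ι → E} (hu : Orthonormal 𝕜 u) (v : E) {x : E}
    (hx : x ∈ Submodule.span 𝕜 (Set.range u)) :
    ‖v - ∑ i, ⟪u i, v⟫_𝕜 • u i‖ ≤ ‖v - x‖ := by
  set U := Submodule.span 𝕜 (Set.range u)
  have : FiniteDimensional 𝕜 U := FiniteDimensional.span_of_finite 𝕜 (Set.finite_range u)
  have hproj : U.starProjection v = ∑ i, ⟪u i, v⟫_𝕜 • u i := by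
    refine Submodule.eq_starProjection_of_mem_of_inner_eq_zero
      (Submodule.sum_mem _ fun i _ => U.smul_mem _ (Submodule.subset_span ⟨i, rfl⟩)) fun w hw => ?_
    have hperp : ∀ i, ⟪v - ∑ j, ⟪u j, v⟫_𝕜 • u j, u i⟫_𝕜 = 0 := fun i => by
      simp [inner_sub_left, hu.inner_left_fintype]
    exact Submodule.span_le (p := LinearMap.ker (innerₛₗ 𝕜 _)).2 (Set.range_subset_iff.2 hperp) hw
  rw [← hproj, Submodule.starProjection_minimal]
  exact ciInf_le ⟨0, by rintro _ ⟨y, rfl⟩; exact norm_nonneg _⟩ (⟨x, hx⟩ : U)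

theorem isCompact_setOf_orthonormal {𝕜 E ι : Type*} [RCLike 𝕜] [NormedAddCommGroup E]
    [InnerProductSpace 𝕜 E] [FiniteDimensional 𝕜 E] [Finite ι] :
    IsCompact {u : ι → E | Orthonormal 𝕜 u} := by
  have hclosed : IsClosed {u : ι → E | Orthonormal 𝕜 u} := by
    classical
    have : {u : ι → E | Orthonormal 𝕜 u} =
        ⋂ i, ⋂ j, {u | ⟪u i, u j⟫_𝕜 = if i = j then 1 else 0} := by
      ext u; simp [orthonormal_iff_ite]
    rw [this]
    exact isClosed_iInter fun i => isClosed_iInter fun j =>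
      isClosed_eq (by fun_prop) continuous_const
  have := FiniteDimensional.proper_rclike 𝕜 E
  exact (isCompact_univ_pi fun _ => isCompact_sphere (0 : E) 1).of_isClosed_subset hclosed
    fun u hu i _ => by simpa using hu.1 i

theorem exists_coordPlane_far_from_span_orthonormal {d k n : ℕ} (h : k + n ≤ d) :
    ∃ c > 0, ∀ u : Fin k → EuclideanSpace ℝ (Fin d), Orthonormal ℝ u →
      ∃ s : Finset (Fin d), s.card = n ∧ ∀ v ∈ coordPlane s, ‖v‖ = 1 →
        ∀ x ∈ Submodule.span ℝ (Set.range u), c ≤ ‖v - x‖ := by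
  let E := EuclideanSpace ℝ (Fin d)
  let Planes := {s : Finset (Fin d) // s.card = n}
  have hPlanes : (Finset.univ : Finset Planes).Nonempty := by
    obtain ⟨s, -, hs⟩ :=
      Finset.exists_subset_card_eq (s := (Finset.univ : Finset (Fin d))) (n := n) (by simp; omega)
    exact ⟨⟨s, hs⟩, Finset.mem_univ _⟩
  let T : Set ((Fin k → E) × (Planes → E)) :=
    {u | Orthonormal ℝ u} ×ˢ Set.univ.pi fun S => (coordPlane S.1 : Set E) ∩ sphere 0 1
  let F : (Fin k → E) × (Planes → E) → ℝ := fun z =>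
    Finset.univ.sup' hPlanes fun S => ‖z.2 S - ∑ i, ⟪z.1 i, z.2 S⟫_ℝ • z.1 i‖
  have hT : IsCompact T := isCompact_setOf_orthonormal.prod <| isCompact_univ_pi fun S =>
    (isCompact_sphere 0 1).inter_left (Submodule.closed_of_finiteDimensional _)
  have hF : Continuous F := Continuous.finset_sup'_apply _ fun S _ => by fun_prop
  have hFpos : ∀ z ∈ T, 0 < F z := by
    rintro ⟨u, w⟩ ⟨hu, hw⟩
    obtain ⟨s, hs, hdisj⟩ := exists_coordPlane_disjoint (Submodule.span ℝ (Set.range u)) (n := n)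
      (by rwa [finrank_span_eq_card hu.linearIndependent, Fintype.card_fin])
    let S : Planes := ⟨s, hs⟩
    obtain ⟨hwP, hw1⟩ := hw S (Set.mem_univ _)
    have hS : w S ≠ ∑ i, ⟪u i, w S⟫_ℝ • u i := fun heq => by
      have hmem : w S ∈ Submodule.span ℝ (Set.range u) := heq ▸ Submodule.sum_mem _
        fun i _ => Submodule.smul_mem _ _ (Submodule.subset_span ⟨i, rfl⟩)
      simp [Submodule.disjoint_def.1 hdisj _ hmem hwP] at hw1
    exact (norm_pos_iff.2 (sub_ne_zero.2 hS)).trans_le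
      (Finset.le_sup' (fun S => ‖w S - ∑ i, ⟪u i, w S⟫_ℝ • u i‖) (Finset.mem_univ S))
  obtain ⟨c, hc, hcF⟩ := hT.exists_forall_le' hF.continuousOn hFpos
  refine ⟨c, hc, fun u hu => ?_⟩
  by_contra! hnear
  choose w hwP hw1 x hx hwx using fun S : Planes => hnear S.1 S.2
  have hcw : c ≤ F (u, w) :=
    hcF (u, w) (Set.mk_mem_prod hu fun S _ => ⟨hwP S, by simpa using hw1 S⟩)
  obtain ⟨S, -, hS⟩ := Finset.exists_mem_eq_sup' hPlanes
    fun S => ‖w S - ∑ i, ⟪u i, w S⟫_ℝ • u i‖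
  have : c ≤ ‖w S - ∑ i, ⟪u i, w S⟫_ℝ • u i‖ := hS ▸ hcw
  linarith [hu.norm_sub_sum_inner_smul_le (w S) (hx S), hwx S]

theorem exists_coordPlane_far_from_subspace {d k n : ℕ} (h : k + n ≤ d) :
    ∃ c > 0, ∀ U : Submodule ℝ (EuclideanSpace ℝ (Fin d)), Module.finrank ℝ U = k →
      ∃ s : Finset (Fin d), s.card = n ∧ ∀ v ∈ coordPlane s, ‖v‖ = 1 → ∀ x ∈ U, c ≤ ‖v - x‖ := by
  obtain ⟨c, hc, hfar⟩ := exists_coordPlane_far_from_span_orthonormal h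
  refine ⟨c, hc, fun U hU => ?_⟩
  subst hU
  let b := stdOrthonormalBasis ℝ U
  have hspan : Submodule.span ℝ (Set.range (U.subtypeₗᵢ ∘ b)) = U := by
    rw [Set.range_comp, U.coe_subtypeₗᵢ, Submodule.span_image, ← b.coe_toBasis,
      b.toBasis.span_eq, Submodule.map_top, Submodule.range_subtype]
  simpa only [hspan] using hfar _ (b.orthonormal.comp_linearIsometry U.subtypeₗᵢ)

theorem Seminorm.le_mul_norm_of_mem_sup_span_singleton {E : Type*} [NormedAddCommGroup E]
    [NormedSpace ℝ E] (N : Seminorm ℝ E) {K : Submodule ℝ E} {v : E} {A B c : ℝ}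
    (hA : 0 ≤ A) (hc : 0 < c) (hK : ∀ x ∈ K, N x ≤ A * ‖x‖) (hv1 : ‖v‖ = 1) (hvB : N v ≤ B)
    (hvK : ∀ x ∈ K, c ≤ ‖v - x‖) {w : E} (hw : w ∈ K ⊔ ℝ ∙ v) :
    N w ≤ (A * (1 + c⁻¹) + B * c⁻¹) * ‖w‖ := by
  obtain ⟨x, hx, _, hy, rfl⟩ := Submodule.mem_sup.1 hw
  obtain ⟨a, rfl⟩ := Submodule.mem_span_singleton.1 hy
  have ha : |a| ≤ c⁻¹ * ‖x + a • v‖ := by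
    rw [le_inv_mul_iff₀ hc]
    rcases eq_or_ne a 0 with rfl | ha
    · simp
    · calc c * |a| ≤ ‖v - -(a⁻¹ • x)‖ * |a| := by
            gcongr; exact hvK _ (K.neg_mem (K.smul_mem _ hx))
        _ = ‖a • (v - -(a⁻¹ • x))‖ := by rw [norm_smul, Real.norm_eq_abs, mul_comm]
        _ = ‖x + a • v‖ := by
            rw [sub_neg_eq_add, smul_add, smul_smul, mul_inv_cancel₀ ha, one_smul, add_comm]
  have hxw : ‖x‖ ≤ (1 + c⁻¹) * ‖x + a • v‖ := by
    calc ‖x‖ ≤ ‖x + a • v‖ + ‖a • v‖ := norm_le_add_norm_add x (a • v)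
      _ ≤ _ := by rw [norm_smul, hv1, Real.norm_eq_abs]; linarith
  calc N (x + a • v) ≤ A * ‖x‖ + |a| * B := by
        refine (map_add_le_add N _ _).trans (add_le_add (hK x hx) ?_)
        rw [map_smul_eq_mul, Real.norm_eq_abs]
        exact mul_le_mul_of_nonneg_left hvB (abs_nonneg a)
    _ ≤ A * ((1 + c⁻¹) * ‖x + a • v‖) + c⁻¹ * ‖x + a • v‖ * B := by
        gcongr
        exact (apply_nonneg N v).trans hvB
    _ = (A * (1 + c⁻¹) + B * c⁻¹) * ‖x + a • v‖ := by ring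

theorem exists_subspace_seminorm_le_of_coordPlane {d n : ℕ} (j : ℕ) (hj : j + n ≤ d + 1) :
    ∃ C > 0, ∀ (δ : ℝ) (N : Seminorm ℝ (EuclideanSpace ℝ (Fin d))),
      (∀ s : Finset (Fin d), s.card = n → ∃ v ∈ coordPlane s, ‖v‖ = 1 ∧ N v < δ) →
      ∃ K : Submodule ℝ (EuclideanSpace ℝ (Fin d)),
        Module.finrank ℝ K = j ∧ ∀ v ∈ K, N v ≤ C * δ * ‖v‖ := by
  induction j with
  | zero => exact ⟨1, one_pos, fun δ N _ => ⟨⊥, finrank_bot ℝ _, by simp⟩⟩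
  | succ j ih =>
    obtain ⟨C, hC, hKC⟩ := ih (by omega)
    obtain ⟨c, hc, hfar⟩ := exists_coordPlane_far_from_subspace (k := j) (n := n) (d := d)
      (by omega)
    refine ⟨C * (1 + c⁻¹) + c⁻¹, by positivity, fun δ N hN => ?_⟩
    obtain ⟨K, hKj, hKN⟩ := hKC δ N hN
    obtain ⟨s, hs, hsK⟩ := hfar K hKj
    obtain ⟨v, hvs, hv1, hvδ⟩ := hN s hs
    have hvK : ∀ x ∈ K, c ≤ ‖v - x‖ := hsK v hvs hv1
    have hv_notMem : v ∉ K := fun hv => by simpa [hc.not_ge] using hvK v hv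
    have hδ : 0 ≤ δ := (apply_nonneg N v).trans hvδ.le
    refine ⟨K ⊔ ℝ ∙ v, by rw [Submodule.finrank_sup_span_singleton hv_notMem, hKj],
      fun w hw => ?_⟩
    calc N w ≤ (C * δ * (1 + c⁻¹) + δ * c⁻¹) * ‖w‖ :=
          N.le_mul_norm_of_mem_sup_span_singleton (by positivity) hc hKN hv1 hvδ.le hvK hw
      _ = (C * (1 + c⁻¹) + c⁻¹) * δ * ‖w‖ := by ring

theorem compressed_seminorm_kernel_general (n m : ℕ) :
    ∃ C₁ : ℝ, 0 < C₁ ∧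
      ∀ δ : ℝ, 0 < δ →
        ∀ N : Seminorm ℝ (EuclideanSpace ℝ (Fin (n + m))),
          (∀ s : Finset (Fin (n + m)), s.card = n →
            ∃ v ∈ coordPlane s, ‖v‖ = 1 ∧ N v < δ) →
          ∃ K₀ : Submodule ℝ (EuclideanSpace ℝ (Fin (n + m))),
            Module.finrank ℝ K₀ = m + 1 ∧ ∀ v ∈ K₀, N v ≤ C₁ * δ * ‖v‖ := by
  obtain ⟨C, hC, hK⟩ :=
    exists_subspace_seminorm_le_of_coordPlane (d := n + m) (n := n) (m + 1) (by omega)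
  exact ⟨C, hC, fun δ _ => hK δ⟩

/-- **Claim (compressed seminorms have large almost-kernel).**  Let `n, m ≥ 1`.  There is a
constant `C₁`, depending only on `n` and `m`, such that for every `δ > 0` and every seminorm
`N` on `ℝ^{n+m}` with the property that every coordinate `n`-plane contains a unit vector `v`
with `N(v) < δ`, there is an `(m+1)`-dimensional subspace `K₀` with `N(v) ≤ C₁·δ·|v|` for every
`v ∈ K₀`. -/
theorem compressed_seminorm_kernel (n m : ℕ) (hn : 1 ≤ n) (hm : 1 ≤ m) :
    ∃ C₁ : ℝ, 0 < C₁ ∧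
      ∀ δ : ℝ, 0 < δ →
        ∀ N : Seminorm ℝ (EuclideanSpace ℝ (Fin (n + m))),
          (∀ s : Finset (Fin (n + m)), s.card = n →
            ∃ v ∈ coordPlane s, ‖v‖ = 1 ∧ N v < δ) →
          ∃ K₀ : Submodule ℝ (EuclideanSpace ℝ (Fin (n + m))),
            Module.finrank ℝ K₀ = m + 1 ∧ ∀ v ∈ K₀, N v ≤ C₁ * δ * ‖v‖ :=
  compressed_seminorm_kernel_general n m
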